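/- If C and D are finitely based permutation classes, then the vertical juxtaposition of C and D is finitely based. -/
import Mathlib


/-- A permutation of length `n`, given as a bijection of `Fin n`
(index/value `i` represents the entry `i+1` of `{1,…,n}`). -/
abbrev Perm' := Σ n : ℕ, Equiv.Perm (Fin n)

/-- `Contains σ π` means the pattern `σ` is contained in `π`. -/
def Contains (σ π : Perm') : Prop :=
  ∃ f : Fin σ.1 → Fin π.1, StrictMono f ∧
    ∀ i j : Fin σ.1, σ.2 i < σ.2 j ↔ π.2 (f i) < π.2 (f j)

/-- A permutation class: a downward-closed set of permutations. -/
def IsPermClass (X : Set Perm') : Prop :=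
  ∀ π ∈ X, ∀ σ : Perm', Contains σ π → σ ∈ X

/-- The avoidance set of a set `B` of permutations. -/
def Av (B : Set Perm') : Set Perm' := {π | ∀ β ∈ B, ¬ Contains β π}

/-- A set of permutations is finitely based if it is `Av B` for a finite `B`. -/
def FinitelyBased (X : Set Perm') : Prop := ∃ B : Set Perm', B.Finite ∧ X = Av B

/-- `PatternOn π S σ`: the entries of `π` at the set `S` of indices form a copy of `σ`. -/
def PatternOn (π : Perm') (S : Set (Fin π.1)) (σ : Perm') : Prop :=
  ∃ f : Fin σ.1 → Fin π.1, StrictMono f ∧ Set.range f = S ∧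
    ∀ i j : Fin σ.1, σ.2 i < σ.2 j ↔ π.2 (f i) < π.2 (f j)

/-- `PatternIn π S X`: the pattern of the entries of `π` at positions `S` lies in `X`. -/
def PatternIn (π : Perm') (S : Set (Fin π.1)) (X : Set Perm') : Prop :=
  ∃ σ ∈ X, PatternOn π S σ

/-- The permutation 21. -/
def perm21 : Perm' := ⟨2, Equiv.swap 0 1⟩
/-- The permutation 12. -/
def perm12 : Perm' := ⟨2, Equiv.refl (Fin 2)⟩
/-- The empty permutation. -/
def emptyPerm : Perm' := ⟨0, Equiv.refl (Fin 0)⟩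

/-- The 2×2 grid class `Grid(A,B;C,D)`: `A` top-left, `B` top-right, `C` bottom-left,
`D` bottom-right.  A position `i : Fin n` represents position `i+1`, so "position `≤ v`"
is `(i:ℕ) < v`, and "value `> h`" is `h ≤ (π.2 i : ℕ)`. -/
def GridClass (A B C D : Set Perm') : Set Perm' :=
  {π | ∃ v h : ℕ, v ≤ π.1 ∧ h ≤ π.1 ∧
    PatternIn π {i | (i : ℕ) < v ∧ h ≤ (π.2 i : ℕ)} A ∧
    PatternIn π {i | v ≤ (i : ℕ) ∧ h ≤ (π.2 i : ℕ)} B ∧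
    PatternIn π {i | (i : ℕ) < v ∧ (π.2 i : ℕ) < h} C ∧
    PatternIn π {i | v ≤ (i : ℕ) ∧ (π.2 i : ℕ) < h} D}

/-- Horizontal juxtaposition of `X` (left) and `Y` (right). -/
def HJuxt (X Y : Set Perm') : Set Perm' :=
  {π | ∃ v : ℕ, v ≤ π.1 ∧
    PatternIn π {i | (i : ℕ) < v} X ∧
    PatternIn π {i | v ≤ (i : ℕ)} Y}

/-- Vertical juxtaposition of `X` (top) and `Y` (bottom). -/
def VJuxt (X Y : Set Perm') : Set Perm' :=
  {π | ∃ h : ℕ, h ≤ π.1 ∧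
    PatternIn π {i | h ≤ (π.2 i : ℕ)} X ∧
    PatternIn π {i | (π.2 i : ℕ) < h} Y}

/-- `Squint≤(A,B;C,D)`: divisions `(v, ℓ, r)` with the left h-line `ℓ` no higher
than the right h-line `r`. -/
def SquintLE (A B C D : Set Perm') : Set Perm' :=
  {π | ∃ v l r : ℕ, v ≤ π.1 ∧ l ≤ π.1 ∧ r ≤ π.1 ∧ l ≤ r ∧
    PatternIn π {i | (i : ℕ) < v ∧ l ≤ (π.2 i : ℕ)} A ∧
    PatternIn π {i | (i : ℕ) < v ∧ (π.2 i : ℕ) < l} C ∧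
    PatternIn π {i | v ≤ (i : ℕ) ∧ r ≤ (π.2 i : ℕ)} B ∧
    PatternIn π {i | v ≤ (i : ℕ) ∧ (π.2 i : ℕ) < r} D}

/-- `Squint≥(A,B;C,D)`: divisions `(v, ℓ, r)` with the left h-line `ℓ` no lower
than the right h-line `r`. -/
def SquintGE (A B C D : Set Perm') : Set Perm' :=
  {π | ∃ v l r : ℕ, v ≤ π.1 ∧ l ≤ π.1 ∧ r ≤ π.1 ∧ r ≤ l ∧
    PatternIn π {i | (i : ℕ) < v ∧ l ≤ (π.2 i : ℕ)} A ∧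
    PatternIn π {i | (i : ℕ) < v ∧ (π.2 i : ℕ) < l} C ∧
    PatternIn π {i | v ≤ (i : ℕ) ∧ r ≤ (π.2 i : ℕ)} B ∧
    PatternIn π {i | v ≤ (i : ℕ) ∧ (π.2 i : ℕ) < r} D}

/-- The basis of a set `X`: minimal permutations not in `X`. -/
def PermBasis (X : Set Perm') : Set Perm' :=
  {π | π ∉ X ∧ ∀ σ : Perm', Contains σ π → σ ≠ π → σ ∈ X}

/-- A copy of `β` inside the entries of `π` at positions in `S`. -/
def CopyIn (β π : Perm') (S : Set (Fin π.1)) : Prop :=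
  ∃ f : Fin β.1 → Fin π.1, StrictMono f ∧ (∀ i, f i ∈ S) ∧
    ∀ i j : Fin β.1, β.2 i < β.2 j ↔ π.2 (f i) < π.2 (f j)

lemma exists_patternOn (π : Perm') (S : Set (Fin π.1)) :
    ∃ σ : Perm', σ.1 = S.ncard ∧ PatternOn π S σ := by
  classical
  set s : Finset (Fin π.1) := S.toFinite.toFinset with hs
  set k := s.card with hk
  have hkcard : k = S.ncard := by
    rw [hk, Set.ncard_eq_toFinset_card S S.toFinite]
  have f0 : Fin k ≃o s := s.orderIsoOfFin rfl
  set f : Fin k → Fin π.1 := fun i => (f0 i : Fin π.1) with hf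
  have hfmono : StrictMono f := fun a b hab => by
    simpa [hf, Subtype.coe_lt_coe] using f0.strictMono hab
  have hfrange : Set.range f = S := by
    ext x
    constructor
    · rintro ⟨i, rfl⟩
      have := (f0 i).2
      simpa [hs] using this
    · intro hx
      have hx' : x ∈ s := by simpa [hs] using hx
      exact ⟨f0.symm ⟨x, hx'⟩, by simp [hf]⟩
  set g : Fin k → Fin π.1 := fun i => π.2 (f i) with hg
  have hginj : Function.Injective g := fun a b hab =>
    hfmono.injective (π.2.injective hab)
  set t : Finset (Fin π.1) := Finset.univ.image g with ht
  have htcard : t.card = k := by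
    rw [ht, Finset.card_image_of_injective _ hginj, Finset.card_univ, Fintype.card_fin]
  have iso : Fin k ≃o t := t.orderIsoOfFin htcard
  set e : Fin k → Fin k := fun i => iso.symm ⟨g i, by simp [ht]⟩ with he
  have heinj : Function.Injective e := by
    intro a b hab
    apply hginj
    have := iso.symm.injective hab
    exact congrArg Subtype.val this
  have hebij : Function.Bijective e := Finite.injective_iff_bijective.mp heinj
  refine ⟨⟨k, Equiv.ofBijective e hebij⟩, hkcard, f, hfmono, hfrange, ?_⟩
  intro i j
  show e i < e j ↔ π.2 (f i) < π.2 (f j)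
  rw [show e i < e j ↔ (⟨g i, by simp [ht]⟩ : t) < ⟨g j, by simp [ht]⟩ from iso.symm.lt_iff_lt,
    Subtype.mk_lt_mk]


lemma contains_of_patternOn_copyIn {π τ β : Perm'} {S : Set (Fin π.1)}
    (hτ : PatternOn π S τ) (hβ : CopyIn β π S) : Contains β τ := by
  classical
  obtain ⟨f, hfmono, hfrange, hford⟩ := hτ
  obtain ⟨g, hgmono, hgmem, hgord⟩ := hβ
  have hex : ∀ i, ∃ j, f j = g i := fun i => by
    have : g i ∈ Set.range f := hfrange ▸ hgmem i
    exact this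
  choose e he using hex
  refine ⟨e, fun a b hab => ?_, fun i j => ?_⟩
  · have : f (e a) < f (e b) := by rw [he a, he b]; exact hgmono hab
    exact hfmono.lt_iff_lt.mp this
  · rw [hgord i j, ← he i, ← he j, hford]

lemma copyIn_of_patternOn_contains {π τ β : Perm'} {S : Set (Fin π.1)}
    (hτ : PatternOn π S τ) (hβ : Contains β τ) : CopyIn β π S := by
  obtain ⟨f, hfmono, hfrange, hford⟩ := hτ
  obtain ⟨g, hgmono, hgord⟩ := hβ
  exact ⟨f ∘ g, hfmono.comp hgmono, fun i => hfrange ▸ Set.mem_range_self (g i),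
    fun i j => (hgord i j).trans (hford (g i) (g j))⟩

lemma not_patternIn_av_iff {B0 : Set Perm'} (π : Perm') (S : Set (Fin π.1)) :
    ¬ PatternIn π S (Av B0) ↔ ∃ β ∈ B0, CopyIn β π S := by
  obtain ⟨σ0, -, hσ0⟩ := exists_patternOn π S
  constructor
  · intro h
    by_cases hav : σ0 ∈ Av B0
    · exact absurd ⟨σ0, hav, hσ0⟩ h
    · simp only [Av, Set.mem_setOf_eq, not_forall] at hav
      obtain ⟨β, hβ, hc⟩ := hav
      exact ⟨β, hβ, copyIn_of_patternOn_contains hσ0 (not_not.mp hc)⟩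
  · rintro ⟨β, hβ, hc⟩ ⟨τ, hτav, hτ⟩
    exact hτav β hβ (contains_of_patternOn_copyIn hτ hc)

/-- Transfer a `PatternIn` fact along a containment embedding. -/
lemma patternIn_transfer {π σ : Perm'} {Sπ : Set (Fin π.1)} {Sσ : Set (Fin σ.1)}
    (g : Fin σ.1 → Fin π.1) (hg : StrictMono g)
    (hord : ∀ i j, σ.2 i < σ.2 j ↔ π.2 (g i) < π.2 (g j))
    (hmap : ∀ j ∈ Sσ, g j ∈ Sπ) {X : Set Perm'} (hX : IsPermClass X)
    (h : PatternIn π Sπ X) : PatternIn σ Sσ X := by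
  obtain ⟨τ, hτX, hτ⟩ := h
  obtain ⟨ρ, -, hρ⟩ := exists_patternOn σ Sσ
  refine ⟨ρ, ?_, hρ⟩
  obtain ⟨fρ, hfρmono, hfρrange, hfρord⟩ := hρ
  have hcopy : CopyIn ρ π Sπ :=
    ⟨g ∘ fρ, hg.comp hfρmono, fun i => hmap _ (hfρrange ▸ Set.mem_range_self i),
      fun i j => (hfρord i j).trans (hord (fρ i) (fρ j))⟩
  exact hX τ hτX ρ (contains_of_patternOn_copyIn hτ hcopy)

/-- A downward-closed subset of `Fin k` is an initial segment. -/
lemma initseg {k : ℕ} (W : Finset (Fin k))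
    (hdc : ∀ w ∈ W, ∀ w', w' < w → w' ∈ W) (w : Fin k) :
    w ∈ W ↔ (w : ℕ) < W.card := by
  constructor
  · intro hw
    have hsub : Finset.Iic w ⊆ W := by
      intro x hx
      rcases lt_or_eq_of_le (Finset.mem_Iic.mp hx) with h | h
      · exact hdc w hw x h
      · exact h ▸ hw
    have := Finset.card_le_card hsub
    rw [Fin.card_Iic] at this
    omega
  · intro hw
    by_contra hnw
    have hsub : W ⊆ Finset.Iio w := by
      intro x hx
      rcases lt_trichotomy x w with h | h | h
      · exact Finset.mem_Iio.mpr h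
      · exact absurd (h ▸ hx) hnw
      · exact absurd (hdc x hx w h) hnw
    have := Finset.card_le_card hsub
    rw [Fin.card_Iio] at this
    omega

lemma vjuxt_isPermClass {C D : Set Perm'} (hC : IsPermClass C) (hD : IsPermClass D) :
    IsPermClass (VJuxt C D) := by
  classical
  rintro π ⟨h, hh, hU, hL⟩ σ ⟨emb, hembmono, hembord⟩
  obtain ⟨k, sperm⟩ := σ
  set T : Finset (Fin k) := Finset.univ.filter (fun j => (π.2 (emb j) : ℕ) < h) with hT
  set h' := T.card with hh'
  have hh'le : h' ≤ k := le_trans (Finset.card_le_card (Finset.filter_subset _ _))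
    (by simp)
  set W : Finset (Fin k) := T.image sperm with hW
  have hWcard : W.card = h' := Finset.card_image_of_injective _ sperm.injective
  have hWdc : ∀ w ∈ W, ∀ w', w' < w → w' ∈ W := by
    intro w hw w' hw'
    obtain ⟨j, hj, rfl⟩ := Finset.mem_image.mp hw
    set j' := sperm.symm w' with hj'
    have hval : sperm j' < sperm j := by rw [hj']; simpa using hw'
    have hπ : π.2 (emb j') < π.2 (emb j) := (hembord j' j).mp hval
    have hjT : (π.2 (emb j) : ℕ) < h := by simpa [hT] using hj
    have : j' ∈ T := by
      simp only [hT, Finset.mem_filter, Finset.mem_univ, true_and]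
      exact lt_trans (by exact_mod_cast hπ) hjT
    exact Finset.mem_image.mpr ⟨j', this, by simp [hj']⟩
  have key : ∀ j : Fin k, (sperm j : ℕ) < h' ↔ (π.2 (emb j) : ℕ) < h := by
    intro j
    rw [← hWcard, ← initseg W hWdc (sperm j)]
    constructor
    · intro hmem
      obtain ⟨j0, hj0, hj0e⟩ := Finset.mem_image.mp hmem
      have : j0 = j := sperm.injective hj0e
      subst this
      simpa [hT] using hj0
    · intro hj
      exact Finset.mem_image.mpr ⟨j, by simpa [hT] using hj, rfl⟩
  refine ⟨h', hh'le, ?_, ?_⟩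
  · refine patternIn_transfer emb hembmono hembord ?_ hC hU
    intro j hj
    simp only [Set.mem_setOf_eq] at hj ⊢
    have := (key j).not
    omega
  · refine patternIn_transfer emb hembmono hembord ?_ hD hL
    intro j hj
    simp only [Set.mem_setOf_eq] at hj ⊢
    exact (key j).mp hj


lemma contains_of_len_zero {β : Perm'} (h : β.1 = 0) (π : Perm') : Contains β π :=
  ⟨fun i => (Nat.not_lt_zero i.1 (h ▸ i.2)).elim,
   by intro a b _; exact (Nat.not_lt_zero a.1 (h ▸ a.2)).elim,
   fun i => (Nat.not_lt_zero i.1 (h ▸ i.2)).elim⟩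

lemma av_eq_empty {B0 : Set Perm'} (h : ∃ β ∈ B0, β.1 = 0) : Av B0 = ∅ := by
  obtain ⟨β, hβ, hβ0⟩ := h
  exact Set.eq_empty_of_forall_notMem fun π hπ => hπ β hβ (contains_of_len_zero hβ0 π)

lemma finitelyBased_empty : FinitelyBased (∅ : Set Perm') := by
  refine ⟨{emptyPerm}, Set.finite_singleton _, ?_⟩
  ext π
  simp only [Set.mem_empty_iff_false, false_iff, Av, Set.mem_setOf_eq]
  intro h
  exact h emptyPerm rfl (contains_of_len_zero rfl π)

lemma vjuxt_empty_left (Y : Set Perm') : VJuxt ∅ Y = ∅ :=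
  Set.eq_empty_of_forall_notMem (by rintro π ⟨h, _, ⟨σ, hσ, -⟩, -⟩; exact hσ)

lemma vjuxt_empty_right (X : Set Perm') : VJuxt X ∅ = ∅ :=
  Set.eq_empty_of_forall_notMem (by rintro π ⟨h, _, -, ⟨σ, hσ, -⟩⟩; exact hσ)

lemma patternIn_av_of_len_zero {π : Perm'} (hn : π.1 = 0) (S : Set (Fin π.1))
    {B0 : Set Perm'} (hB0 : ∀ β ∈ B0, 0 < β.1) : PatternIn π S (Av B0) := by
  refine ⟨emptyPerm, ?_, ?_⟩
  · rintro β hβ ⟨f, -, -⟩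
    exact (f ⟨0, hB0 β hβ⟩).elim0
  · refine ⟨fun i => i.elim0, by intro a; exact a.elim0, ?_, fun i => i.elim0⟩
    have hS : S = ∅ :=
      Set.eq_empty_of_forall_notMem fun x _ => (Nat.not_lt_zero x.1 (hn ▸ x.2)).elim
    rw [hS]
    exact Set.eq_empty_of_forall_notMem (by rintro x ⟨i, -⟩; exact i.elim0)


/-- The vertical juxtaposition of finitely based permutation
classes is finitely based. -/
theorem vjuxt_finitelyBased (C D : Set Perm')
    (hC : IsPermClass C) (hD : IsPermClass D)
    (hCfb : FinitelyBased C) (hDfb : FinitelyBased D) :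
    FinitelyBased (VJuxt C D) := by
  classical
  obtain ⟨BC, hBCfin, hCeq⟩ := hCfb
  obtain ⟨BD, hBDfin, hDeq⟩ := hDfb
  subst hCeq; subst hDeq
  by_cases hCz : ∃ β ∈ BC, β.1 = 0
  · rw [av_eq_empty hCz, vjuxt_empty_left]; exact finitelyBased_empty
  by_cases hDz : ∃ β ∈ BD, β.1 = 0
  · rw [av_eq_empty hDz, vjuxt_empty_right]; exact finitelyBased_empty
  push_neg at hCz hDz
  replace hCz : ∀ β ∈ BC, 0 < β.1 := fun β hβ => Nat.pos_of_ne_zero (hCz β hβ)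
  replace hDz : ∀ β ∈ BD, 0 < β.1 := fun β hβ => Nat.pos_of_ne_zero (hDz β hβ)
  obtain ⟨bC, hbC⟩ := (hBCfin.image Sigma.fst).bddAbove
  obtain ⟨bD, hbD⟩ := (hBDfin.image Sigma.fst).bddAbove
  set N := bC + bD with hN
  set B : Set Perm' := {σ | σ ∉ VJuxt (Av BC) (Av BD) ∧ σ.1 ≤ N} with hB
  have hBfin : B.Finite := by
    have hsub : B ⊆ ⋃ n ∈ Finset.range (N + 1), Set.range (Sigma.mk n) := by
      rintro σ ⟨-, hlen⟩
      simp only [Set.mem_iUnion, Finset.mem_range, Set.mem_range]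
      exact ⟨σ.1, by omega, σ.2, (by cases σ; rfl)⟩
    exact (Set.Finite.biUnion (Finset.range (N + 1)).finite_toSet
      (fun n _ => Set.finite_range _)).subset hsub
  refine ⟨B, hBfin, Set.Subset.antisymm ?_ ?_⟩
  · -- VJuxt ⊆ Av B
    intro π hπ β hβ hcont
    exact hβ.1 (vjuxt_isPermClass hC hD π hπ β hcont)
  · -- Av B ⊆ VJuxt
    intro π hπAv
    by_contra hπ
    set n := π.1 with hn
    have PorQ : ∀ h ≤ n, (∃ β ∈ BC, CopyIn β π {i | h ≤ (π.2 i : ℕ)}) ∨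
        (∃ β ∈ BD, CopyIn β π {i | (π.2 i : ℕ) < h}) := by
      intro h hh
      have hnot : ¬ (PatternIn π {i | h ≤ (π.2 i : ℕ)} (Av BC) ∧
          PatternIn π {i | (π.2 i : ℕ) < h} (Av BD)) := by
        intro ⟨hU, hL⟩
        exact hπ ⟨h, hh, hU, hL⟩
      rcases not_and_or.mp hnot with hU | hL
      · exact Or.inl ((not_patternIn_av_iff π _).mp hU)
      · exact Or.inr ((not_patternIn_av_iff π _).mp hL)
    have hn0 : 0 < n := by
      by_contra hn0
      have hz : π.1 = 0 := by omega
      exact hπ ⟨0, by omega, patternIn_av_of_len_zero hz _ hCz,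
        patternIn_av_of_len_zero hz _ hDz⟩
    set P : ℕ → Prop := fun h => ∃ β ∈ BC, CopyIn β π {i | h ≤ (π.2 i : ℕ)} with hP
    have hP0 : P 0 := by
      refine (PorQ 0 (Nat.zero_le n)).resolve_right ?_
      rintro ⟨β, hβ, f, -, hmem, -⟩
      exact absurd (hmem ⟨0, hDz β hβ⟩) (by simp)
    have hPn : ¬ P n := by
      rintro ⟨β, hβ, f, -, hmem, -⟩
      have h1 := hmem ⟨0, hCz β hβ⟩
      have h2 := (π.2 (f ⟨0, hCz β hβ⟩)).2
      simp only [Set.mem_setOf_eq] at h1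
      omega
    have hPex : ∃ h, ¬ P h := ⟨n, hPn⟩
    set m := Nat.find hPex with hm
    have hmnot : ¬ P m := Nat.find_spec hPex
    have hmle : m ≤ n := Nat.find_le hPn
    have hm1 : 0 < m := by
      rcases Nat.eq_zero_or_pos m with h | h
      · exact absurd (h ▸ hP0) hmnot
      · exact h
    have hPm1 : P (m - 1) := not_not.mp (Nat.find_min hPex (by omega))
    have hQm : ∃ β ∈ BD, CopyIn β π {i | (π.2 i : ℕ) < m} :=
      (PorQ m hmle).resolve_left hmnot
    obtain ⟨βc, hβc, fc, hfcmono, hfcmem, hfcord⟩ := hPm1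
    obtain ⟨βd, hβd, fd, hfdmono, hfdmem, hfdord⟩ := hQm
    set S : Set (Fin π.1) := Set.range fc ∪ Set.range fd with hS
    obtain ⟨σ, hσlen, hσpat⟩ := exists_patternOn π S
    have hrc : (Set.range fc).ncard = βc.1 := by
      rw [← Nat.card_coe_set_eq, Nat.card_range_of_injective hfcmono.injective,
        Nat.card_eq_fintype_card, Fintype.card_fin]
    have hrd : (Set.range fd).ncard = βd.1 := by
      rw [← Nat.card_coe_set_eq, Nat.card_range_of_injective hfdmono.injective,
        Nat.card_eq_fintype_card, Fintype.card_fin]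
    have hlen : σ.1 ≤ N := by
      have h1 : S.ncard ≤ (Set.range fc).ncard + (Set.range fd).ncard :=
        Set.ncard_union_le _ _
      have h2 : βc.1 ≤ bC := hbC ⟨βc, hβc, rfl⟩
      have h3 : βd.1 ≤ bD := hbD ⟨βd, hβd, rfl⟩
      rw [hσlen]
      omega
    have hσnot : σ ∉ VJuxt (Av BC) (Av BD) := by
      rintro ⟨h', hh', hU, hL⟩
      obtain ⟨f, hfmono, hfrange, hford⟩ := hσpat
      have hsplit : (∀ j, f j ∈ Set.range fc → h' ≤ (σ.2 j : ℕ)) ∨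
          (∀ j, f j ∈ Set.range fd → (σ.2 j : ℕ) < h') := by
        by_contra hcon
        push_neg at hcon
        obtain ⟨⟨j1, hj1, hlt1⟩, ⟨j2, hj2, hge2⟩⟩ := hcon
        have h12 : σ.2 j1 < σ.2 j2 := by
          rw [Fin.lt_def]; omega
        have hπ12 : (π.2 (f j1) : ℕ) < (π.2 (f j2) : ℕ) := (hford j1 j2).mp h12
        obtain ⟨a, ha⟩ := hj1
        obtain ⟨b, hb⟩ := hj2
        have h1 : m - 1 ≤ (π.2 (f j1) : ℕ) := by
          have := hfcmem a
          rw [ha] at this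
          exact this
        have h2 : (π.2 (f j2) : ℕ) < m := by
          have := hfdmem b
          rw [hb] at this
          exact this
        omega
      rcases hsplit with hcase | hcase
      · have hcopy : CopyIn βc σ {j | h' ≤ (σ.2 j : ℕ)} := by
          have hex : ∀ i, ∃ j, f j = fc i := fun i =>
            (hfrange ▸ (Or.inl (Set.mem_range_self i) : fc i ∈ S) : fc i ∈ Set.range f)
          choose e he using hex
          refine ⟨e, ?_, fun i => hcase (e i) (by rw [he i]; exact Set.mem_range_self i),
            fun i j => ?_⟩
          · intro a b hab
            exact hfmono.lt_iff_lt.mp (by rw [he a, he b]; exact hfcmono hab)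
          · rw [hfcord i j, ← he i, ← he j, hford]
        exact (not_patternIn_av_iff σ _).mpr ⟨βc, hβc, hcopy⟩ hU
      · have hcopy : CopyIn βd σ {j | (σ.2 j : ℕ) < h'} := by
          have hex : ∀ i, ∃ j, f j = fd i := fun i =>
            (hfrange ▸ (Or.inr (Set.mem_range_self i) : fd i ∈ S) : fd i ∈ Set.range f)
          choose e he using hex
          refine ⟨e, ?_, fun i => hcase (e i) (by rw [he i]; exact Set.mem_range_self i),
            fun i j => ?_⟩
          · intro a b hab
            exact hfmono.lt_iff_lt.mp (by rw [he a, he b]; exact hfdmono hab)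
          · rw [hfdord i j, ← he i, ← he j, hford]
        exact (not_patternIn_av_iff σ _).mpr ⟨βd, hβd, hcopy⟩ hL
    have hcont : Contains σ π := by
      obtain ⟨f, hfmono, -, hford⟩ := hσpat
      exact ⟨f, hfmono, hford⟩
    exact hπAv σ ⟨hσnot, hlen⟩ hcont
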